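/- Fix α ≥ 0, d > 0, k > 0, γ > 0, T_∞ > 0. The map h₀ ↦ ν_{h₀}, where ν_{h₀} is the unique positive root of h₀T_∞/(γ2^α d^{(α+1)/2}) = x^{α+1}[M(α/2+1/2,1/2,x²) + 2(√d h₀/k) x M(α/2+1,3/2,x²)], is strictly increasing on (0,∞) and bounded above by ν_∞, the unique positive root of kT_∞/(2^{α+1}d^{α/2+1}γ) = x^{α+2}M(α/2+1,3/2,x²). -/

import Mathlib

/-!
Write `A x = x^(α+1) M(α/2+1/2, 1/2, x²)`, `B x = x^(α+2) M(α/2+1, 3/2, x²)`,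
`C = T∞ / (γ 2^α d^((α+1)/2))` and `c = 2√d / k`. Dividing the equation for `ν_h` by `h` gives
`C = A ν_h / h + c B ν_h`, and the equation for `ν_∞` reads `C = c B ν_∞`. The power series of
`M` has nonnegative coefficients, so `A > 0` and `A`, `B` are increasing on `(0, ∞)`. Hence the
right-hand side `A x / h + c B x` increases in `x` and strictly decreases in `h`, which forces `ν_h`
to increase strictly with `h`; and `c B ν_h < C = c B ν_∞` forces `ν_h < ν_∞`.
-/

open Real Filter Topology

/-- The Kummer confluent hypergeometric function `M(a,b,z)`, defined by its power series. -/
noncomputable def kummerM (a b z : ℝ) : ℝ :=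
  ∑' s : ℕ, ((ascPochhammer ℝ s).eval a / ((ascPochhammer ℝ s).eval b * (Nat.factorial s : ℝ)))
      * z ^ s

open Set

noncomputable def kummerTerm (a b z : ℝ) (s : ℕ) : ℝ :=
  (ascPochhammer ℝ s).eval a / ((ascPochhammer ℝ s).eval b * (Nat.factorial s : ℝ)) * z ^ s

theorem kummerTerm_succ (a b z : ℝ) (s : ℕ) :
    kummerTerm a b z (s + 1) = kummerTerm a b z s * ((a + s) * z / ((b + s) * (s + 1))) := by
  simp only [kummerTerm, ascPochhammer_succ_eval, Nat.factorial_succ, pow_succ, Nat.cast_mul,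
    Nat.cast_succ, div_eq_mul_inv, mul_inv]
  ring

section

variable {a b z : ℝ}

theorem kummerTerm_nonneg (ha : 0 < a) (hb : 0 < b) (hz : 0 ≤ z) (s : ℕ) :
    0 ≤ kummerTerm a b z s := by
  have := ascPochhammer_pos s a ha
  have := ascPochhammer_pos s b hb
  unfold kummerTerm
  positivity

theorem kummerTerm_ratio_le_half (ha : 0 < a) (hb : 0 < b) (hz : 0 ≤ z) {s : ℕ}
    (hs : 1 ≤ s) (hsz : 2 * (a + 1) * z ≤ s) :
    (a + s) * z / ((b + s) * (s + 1)) ≤ 1 / 2 := by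
  have hs' : (1 : ℝ) ≤ s := by exact_mod_cast hs
  rw [div_le_iff₀ (by positivity)]
  nlinarith [mul_nonneg (mul_nonneg ha.le (sub_nonneg.2 hs')) hz,
    mul_le_mul_of_nonneg_left hsz (Nat.cast_nonneg s : (0 : ℝ) ≤ s)]

theorem summable_kummerTerm (ha : 0 < a) (hb : 0 < b) (hz : 0 ≤ z) :
    Summable (kummerTerm a b z) := by
  refine summable_of_ratio_norm_eventually_le (r := 1 / 2) (by norm_num) ?_
  filter_upwards [eventually_ge_atTop 1, eventually_ge_atTop ⌈2 * (a + 1) * z⌉₊] with s hs hsz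
  rw [Real.norm_of_nonneg (kummerTerm_nonneg ha hb hz _),
    Real.norm_of_nonneg (kummerTerm_nonneg ha hb hz _), kummerTerm_succ, mul_comm (1 / 2 : ℝ)]
  exact mul_le_mul_of_nonneg_left
    (kummerTerm_ratio_le_half ha hb hz hs (Nat.ceil_le.1 hsz)) (kummerTerm_nonneg ha hb hz s)

theorem one_le_kummerM (ha : 0 < a) (hb : 0 < b) (hz : 0 ≤ z) : 1 ≤ kummerM a b z := by
  calc 1 = kummerTerm a b z 0 := by simp [kummerTerm]
    _ ≤ kummerM a b z :=
      (summable_kummerTerm ha hb hz).le_tsum 0 fun s _ ↦ kummerTerm_nonneg ha hb hz s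

theorem kummerM_pos (ha : 0 < a) (hb : 0 < b) (hz : 0 ≤ z) : 0 < kummerM a b z :=
  one_pos.trans_le (one_le_kummerM ha hb hz)

theorem kummerM_monotoneOn (ha : 0 < a) (hb : 0 < b) : MonotoneOn (kummerM a b) (Ici 0) :=
  fun z₁ hz₁ z₂ hz₂ hz ↦ (summable_kummerTerm ha hb hz₁).tsum_le_tsum
    (fun s ↦ mul_le_mul_of_nonneg_left (pow_le_pow_left₀ hz₁ hz s)
      (by have := ascPochhammer_pos s a ha; have := ascPochhammer_pos s b hb; positivity))
    (summable_kummerTerm ha hb hz₂)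

end

noncomputable def kummerPow (p a b x : ℝ) : ℝ := x ^ p * kummerM a b (x ^ 2)

section

variable {p a b : ℝ}

theorem kummerPow_pos (ha : 0 < a) (hb : 0 < b) {x : ℝ} (hx : 0 < x) : 0 < kummerPow p a b x :=
  mul_pos (rpow_pos_of_pos hx p) (kummerM_pos ha hb (sq_nonneg x))

theorem kummerPow_monotoneOn (hp : 0 ≤ p) (ha : 0 < a) (hb : 0 < b) :
    MonotoneOn (kummerPow p a b) (Ici 0) := by
  intro x hx y hy hxy
  have hx : (0 : ℝ) ≤ x := hx
  exact mul_le_mul (rpow_le_rpow hx hxy hp)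
    (kummerM_monotoneOn ha hb (sq_nonneg x) (sq_nonneg y) (pow_le_pow_left₀ hx hxy 2))
    (kummerM_pos ha hb (sq_nonneg x)).le (rpow_nonneg (hx.trans hxy) p)

end

section

variable {α d k : ℝ}

theorem div_eq_kummerPow_div_add_mul {T D h x : ℝ} (hh : h ≠ 0) (hx : x ≠ 0)
    (heq : h * T / D = x ^ (α + 1) * (kummerM (α / 2 + 1 / 2) (1 / 2) (x ^ 2)
      + 2 * (√d * h / k) * x * kummerM (α / 2 + 1) (3 / 2) (x ^ 2))) :
    T / D = kummerPow (α + 1) (α / 2 + 1 / 2) (1 / 2) x / h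
      + 2 * √d / k * kummerPow (α + 2) (α / 2 + 1) (3 / 2) x := by
  rw [← mul_div_cancel_left₀ (T / D) hh, ← mul_div_assoc, heq, kummerPow, kummerPow,
    show α + 2 = α + 1 + 1 by ring, rpow_add_one hx (α + 1)]
  field_simp

theorem div_eq_mul_kummerPow {γ T y : ℝ} (hd : 0 < d) (hk : k ≠ 0)
    (heq : k * T / (2 ^ (α + 1) * d ^ (α / 2 + 1) * γ)
      = y ^ (α + 2) * kummerM (α / 2 + 1) (3 / 2) (y ^ 2)) :
    T / (γ * 2 ^ α * d ^ ((α + 1) / 2)) = 2 * √d / k * kummerPow (α + 2) (α / 2 + 1) (3 / 2) y := by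
  have h2 : (2 : ℝ) ^ (α + 1) = 2 ^ α * 2 := rpow_add_one two_ne_zero α
  have hd' : d ^ (α / 2 + 1) = d ^ ((α + 1) / 2) * √d := by
    rw [sqrt_eq_rpow, ← rpow_add hd]
    ring_nf
  rw [kummerPow, ← heq, h2, hd']
  field_simp

end

section

variable {A B : ℝ → ℝ} {C c : ℝ}

theorem strictMonoOn_of_eq_div_add_mul {ν : ℝ → ℝ} (hA : MonotoneOn A (Ioi 0))
    (hA_pos : ∀ x, 0 < x → 0 < A x) (hB : MonotoneOn B (Ioi 0)) (hc : 0 ≤ c)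
    (hν : ∀ h, 0 < h → 0 < ν h ∧ C = A (ν h) / h + c * B (ν h)) :
    StrictMonoOn ν (Ioi 0) := by
  intro h₁ hh₁ h₂ hh₂ h₁₂
  obtain ⟨hν₁, hC₁⟩ := hν h₁ hh₁
  obtain ⟨hν₂, hC₂⟩ := hν h₂ hh₂
  by_contra! hle
  refine lt_irrefl C ?_
  calc C = A (ν h₂) / h₂ + c * B (ν h₂) := hC₂
    _ < A (ν h₂) / h₁ + c * B (ν h₂) :=
      add_lt_add_left (div_lt_div_of_pos_left (hA_pos _ hν₂) hh₁ h₁₂) _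
    _ ≤ A (ν h₁) / h₁ + c * B (ν h₁) :=
      add_le_add (div_le_div_of_nonneg_right (hA hν₂ hν₁ hle) (le_of_lt hh₁))
        (mul_le_mul_of_nonneg_left (hB hν₂ hν₁ hle) hc)
    _ = C := hC₁.symm

theorem lt_of_eq_div_add_mul_of_eq_mul (hB : MonotoneOn B (Ioi 0)) (hc : 0 < c) {h x y : ℝ}
    (hh : 0 < h) (hx : 0 < x) (hy : 0 < y) (hAx : 0 < A x)
    (hCx : C = A x / h + c * B x) (hCy : C = c * B y) : x < y := by
  by_contra! hle
  refine lt_irrefl C ?_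
  calc C = c * B y := hCy
    _ ≤ c * B x := mul_le_mul_of_nonneg_left (hB hy hx hle) hc.le
    _ < A x / h + c * B x := lt_add_of_pos_left _ (div_pos hAx hh)
    _ = C := hCx.symm

end

theorem nu_strictMono_and_bounded_general (α d k γ Tinf : ℝ)
    (hα : 0 ≤ α) (hd : 0 < d) (hk : 0 < k)
    (νf : ℝ → ℝ)
    (hνf : ∀ h₀ : ℝ, 0 < h₀ → 0 < νf h₀ ∧
      h₀ * Tinf / (γ * 2 ^ α * d ^ ((α + 1) / 2))
        = (νf h₀) ^ (α + 1) * (kummerM (α / 2 + 1 / 2) (1 / 2) ((νf h₀) ^ 2)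
            + 2 * (Real.sqrt d * h₀ / k) * νf h₀ * kummerM (α / 2 + 1) (3 / 2) ((νf h₀) ^ 2)))
    (νinf : ℝ) (hνinf : 0 < νinf)
    (hνinfeq : k * Tinf / (2 ^ (α + 1) * d ^ (α / 2 + 1) * γ)
      = νinf ^ (α + 2) * kummerM (α / 2 + 1) (3 / 2) (νinf ^ 2)) :
    StrictMonoOn νf (Set.Ioi 0) ∧ ∀ h₀ : ℝ, 0 < h₀ → νf h₀ ≤ νinf := by
  have ha₁ : 0 < α / 2 + 1 / 2 := by linarith
  have ha₂ : 0 < α / 2 + 1 := by linarith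
  have hA_pos (x : ℝ) (hx : 0 < x) := kummerPow_pos (p := α + 1) ha₁ one_half_pos hx
  have hA : MonotoneOn (kummerPow (α + 1) (α / 2 + 1 / 2) (1 / 2)) (Ioi 0) :=
    (kummerPow_monotoneOn (by linarith) ha₁ one_half_pos).mono Ioi_subset_Ici_self
  have hB : MonotoneOn (kummerPow (α + 2) (α / 2 + 1) (3 / 2)) (Ioi 0) :=
    (kummerPow_monotoneOn (by linarith) ha₂ (by norm_num)).mono Ioi_subset_Ici_self
  have hc : 0 < 2 * √d / k := by positivity
  have hν (h : ℝ) (hh : 0 < h) := And.intro (hνf h hh).1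
    (div_eq_kummerPow_div_add_mul hh.ne' (hνf h hh).1.ne' (hνf h hh).2)
  have hνinf' := div_eq_mul_kummerPow hd hk.ne' hνinfeq
  exact ⟨strictMonoOn_of_eq_div_add_mul hA hA_pos hB hc.le hν, fun h hh ↦
    (lt_of_eq_div_add_mul_of_eq_mul hB hc hh (hν h hh).1 hνinf (hA_pos _ (hν h hh).1)
      (hν h hh).2 hνinf').le⟩

/-- monotonicity in `h₀` of the free-boundary coefficient, bounded above
by the limit coefficient `νinf`. -/
theorem nu_strictMono_and_bounded (α d k γ Tinf : ℝ)
    (hα : 0 ≤ α) (hd : 0 < d) (hk : 0 < k) (hγ : 0 < γ) (hT : 0 < Tinf)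
    (νf : ℝ → ℝ)
    (hνf : ∀ h₀ : ℝ, 0 < h₀ → 0 < νf h₀ ∧
      h₀ * Tinf / (γ * 2 ^ α * d ^ ((α + 1) / 2))
        = (νf h₀) ^ (α + 1) * (kummerM (α / 2 + 1 / 2) (1 / 2) ((νf h₀) ^ 2)
            + 2 * (Real.sqrt d * h₀ / k) * νf h₀ * kummerM (α / 2 + 1) (3 / 2) ((νf h₀) ^ 2)))
    (νinf : ℝ) (hνinf : 0 < νinf)
    (hνinfeq : k * Tinf / (2 ^ (α + 1) * d ^ (α / 2 + 1) * γ)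
      = νinf ^ (α + 2) * kummerM (α / 2 + 1) (3 / 2) (νinf ^ 2)) :
    StrictMonoOn νf (Set.Ioi 0) ∧ ∀ h₀ : ℝ, 0 < h₀ → νf h₀ ≤ νinf :=
  nu_strictMono_and_bounded_general α d k γ Tinf hα hd hk νf hνf νinf hνinf hνinfeq
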